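/- Asymptotic consensus (Lemma on invariant sets, second part): under the same hypotheses — G a connected undirected graph on n nodes with m edges, incidence matrix B, B̂ = B ⊗ I₃, x : [0, ∞) → ℝ^{3n} locally Lipschitz with Σᵢ ‖xᵢ(0)‖₂² < C < 4π², and for almost every t, x′(t) = −L_{x(t)} B̂ s(t) for some sign-selection s(t) for B̂ᵀ x(t) — the solution converges to the consensus space: dist(x(t), 𝒞) → 0 as t → ∞, where 𝒞 = {x ∈ ℝ^{3n} : x₁ = x₂ = ⋯ = xₙ}. -/

import Mathlib

open Matrix Real

noncomputable section

/-- The skew-symmetric "hat" matrix of a vector in ℝ³. -/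
def hatm (p : Fin 3 → ℝ) : Matrix (Fin 3) (Fin 3) ℝ :=
  !![0, -p 2, p 1; p 2, 0, -p 0; -p 1, p 0, 0]

/-- The Euclidean (ℓ²) norm on ℝ³. -/
def norm2 (p : Fin 3 → ℝ) : ℝ := Real.sqrt (∑ i, p i ^ 2)

/-- The unnormalized sinc function: α · sinc α = sin α, sinc 0 = 1. -/
def sinc (α : ℝ) : ℝ := if α = 0 then 1 else Real.sin α / α

/-- c(θ) = sinc(θ)/sinc²(θ/2). -/
def cfun (θ : ℝ) : ℝ := _root_.sinc θ / _root_.sinc (θ / 2) ^ 2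

/-- The symmetric part L¹ₓ of the transition matrix (L¹₀ := I₃). -/
def L1mat (x : Fin 3 → ℝ) : Matrix (Fin 3) (Fin 3) ℝ :=
  if x = 0 then 1 else
    cfun (norm2 x) • (1 : Matrix (Fin 3) (Fin 3) ℝ)
      + ((1 - cfun (norm2 x)) / norm2 x ^ 2) • vecMulVec x x

/-- The transition matrix Lₓ of the axis-angle kinematics (L₀ := I₃). -/
def Lmat (x : Fin 3 → ℝ) : Matrix (Fin 3) (Fin 3) ℝ :=
  if x = 0 then 1 else
    cfun (norm2 x) • (1 : Matrix (Fin 3) (Fin 3) ℝ)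
      + ((1 - cfun (norm2 x)) / norm2 x ^ 2) • vecMulVec x x
      + (1 / 2 : ℝ) • hatm x

/-- `s` is a sign-selection for `z`: each component lies in [−1,1] and equals
`sign (z ℓ)` whenever `z ℓ ≠ 0`. -/
def SignSel {k : Type*} (s z : k → ℝ) : Prop :=
  ∀ ℓ, s ℓ ∈ Set.Icc (-1 : ℝ) 1 ∧ (z ℓ ≠ 0 → s ℓ = Real.sign (z ℓ))

/-- Vector-valued (ℝ³-blocks) sign-selection, componentwise. -/
def SignSelV {m : ℕ} (s z : Fin m → Fin 3 → ℝ) : Prop :=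
  ∀ e k, s e k ∈ Set.Icc (-1 : ℝ) 1 ∧ (z e k ≠ 0 → s e k = Real.sign (z e k))

/-- Total Euclidean norm on the stacked state space ℝ^{3n}. -/
def nrmTot {n : ℕ} (y : Fin n → Fin 3 → ℝ) : ℝ := Real.sqrt (∑ i, ∑ k, y i k ^ 2)

/-- Euclidean distance from a stacked state to the consensus space
𝒞 = {x : x₁ = ⋯ = xₙ} (the set of vectors of the form 𝟙 ⊗ c). -/
def distToConsensus {n : ℕ} (y : Fin n → Fin 3 → ℝ) : ℝ :=
  sInf {d : ℝ | ∃ c : Fin 3 → ℝ, d = nrmTot (fun i => y i - c)}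

/-!
The squared norm `V = ‖x‖²` is a Lyapunov function: `pᵀ L_p = pᵀ`, so along solutions
`V' = -2 ‖B̂ᵀ x‖₁` almost everywhere. Hence `V` is nonincreasing and every block stays in the
ball of radius `‖x(0)‖ < 2π`, on which `c`, and with it `L_x`, is bounded. Thus `x`, and then
`‖B̂ᵀ x‖₁`, is Lipschitz on `[0, ∞)`, while `∫₀^∞ ‖B̂ᵀ x‖₁ ≤ V(0) / 2`; Barbalat's lemma gives
`‖B̂ᵀ x‖₁ → 0`. On a connected graph the distance to consensus is at most a multiple of `‖B̂ᵀ x‖₁`.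
-/

open MeasureTheory Filter Topology Set NNReal

theorem AbsolutelyContinuousOnInterval.integral_eq_sub_of_ae_hasDerivAt {f f' : ℝ → ℝ}
    {a b : ℝ} (hf : AbsolutelyContinuousOnInterval f a b)
    (hd : ∀ᵐ t, t ∈ uIcc a b → HasDerivAt f (f' t) t) :
    ∫ t in a..b, f' t = f b - f a := by
  rw [← hf.integral_deriv_eq_sub]
  refine intervalIntegral.integral_congr_ae ?_
  filter_upwards [hd] with t ht hmem
  exact (ht (uIoc_subset_uIcc hmem)).deriv.symm

theorem LipschitzOnWith.norm_sub_le_of_ae_norm_deriv_le {E : Type*} [NormedAddCommGroup E]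
    [NormedSpace ℝ E] {f f' : ℝ → E} {a b M : ℝ} {K : ℝ≥0}
    (hf : LipschitzOnWith K f (uIcc a b))
    (hd : ∀ᵐ t, t ∈ uIcc a b → HasDerivAt f (f' t) t ∧ ‖f' t‖ ≤ M) :
    ‖f b - f a‖ ≤ M * |b - a| := by
  obtain ⟨φ, hφ1, hφ⟩ := exists_dual_vector'' ℝ (f b - f a)
  have hφ' : φ (f b - f a) = ‖f b - f a‖ := hφ
  have hφf : AbsolutelyContinuousOnInterval (φ ∘ f) a b :=
    (φ.lipschitz.comp_lipschitzOnWith hf).absolutelyContinuousOnInterval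
  rw [← hφ', map_sub]
  refine (le_abs_self _).trans ?_
  change |(φ ∘ f) b - (φ ∘ f) a| ≤ _
  rw [← hφf.integral_eq_sub_of_ae_hasDerivAt (f' := fun t => φ (f' t))
    (hd.mono fun t ht hmem => φ.hasFDerivAt.comp_hasDerivAt t (ht hmem).1), ← Real.norm_eq_abs]
  refine intervalIntegral.norm_integral_le_of_norm_le_const_ae ?_
  filter_upwards [hd] with t ht hmem
  calc ‖φ (f' t)‖ ≤ ‖φ‖ * ‖f' t‖ := φ.le_opNorm _
    _ ≤ 1 * M := mul_le_mul hφ1 (ht (uIoc_subset_uIcc hmem)).2 (norm_nonneg _) zero_le_one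
    _ = M := one_mul M

theorem lipschitzOnWith_Ici_of_ae_norm_deriv_le {E : Type*} [NormedAddCommGroup E]
    [NormedSpace ℝ E] {f f' : ℝ → E} {a : ℝ} {M : ℝ≥0}
    (hf : ∀ b c, a ≤ b → ∃ K : ℝ≥0, LipschitzOnWith K f (Icc b c))
    (hd : ∀ᵐ t, a ≤ t → HasDerivAt f (f' t) t ∧ ‖f' t‖ ≤ M) :
    LipschitzOnWith M f (Ici a) := by
  refine LipschitzOnWith.of_dist_le_mul fun b hb c hc => ?_
  obtain ⟨K, hK⟩ := hf (min b c) (max b c) (le_min hb hc)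
  rw [dist_eq_norm, Real.dist_eq, norm_sub_rev, abs_sub_comm]
  refine hK.norm_sub_le_of_ae_norm_deriv_le (f' := f') ?_
  filter_upwards [hd] with t ht hmem
  exact ht ((le_min hb hc).trans hmem.1)

theorem ContDiff.exists_lipschitzOnWith_comp {α F G : Type*} [PseudoMetricSpace α]
    [NormedAddCommGroup F] [NormedSpace ℝ F] [NormedAddCommGroup G] [NormedSpace ℝ G]
    {q : F → G} (hq : ContDiff ℝ 1 q) {f : α → F} {s : Set α} {K : ℝ≥0} (hs : IsCompact s)
    (hf : LipschitzOnWith K f s) : ∃ K', LipschitzOnWith K' (q ∘ f) s := by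
  obtain ⟨K', hK'⟩ := hq.locallyLipschitz.locallyLipschitzOn.exists_lipschitzOnWith_of_compact
    (hs.image_of_continuousOn hf.continuousOn)
  exact ⟨K' * K, hK'.comp hf (mapsTo_image f s)⟩

lemma AntitoneOn.exists_tendsto_atTop {f : ℝ → ℝ} {a : ℝ} (hf : AntitoneOn f (Ici a))
    (hbdd : BddBelow (f '' Ici a)) : ∃ L, Tendsto f atTop (𝓝 L) := by
  obtain ⟨L₀, hL₀⟩ := hbdd
  have hanti : Antitone fun t => f (max a t) := fun s t hst =>
    hf (le_max_left a s) (le_max_left a t) (max_le_max le_rfl hst)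
  have hbdd' : BddBelow (range fun t => f (max a t)) :=
    ⟨L₀, by rintro _ ⟨t, rfl⟩; exact hL₀ ⟨max a t, le_max_left a t, rfl⟩⟩
  exact ⟨_, (tendsto_atTop_ciInf hanti hbdd').congr' <|
    (eventually_ge_atTop a).mono fun t ht => by rw [max_eq_right ht]⟩

/-- Barbalat's lemma. -/
theorem tendsto_zero_of_integral_tendsto {F g : ℝ → ℝ} {K : ℝ≥0} {L : ℝ}
    (hg : LipschitzOnWith K g (Ici 0))
    (hF : ∀ a b, 0 ≤ a → a ≤ b → ∫ t in a..b, g t = F b - F a)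
    (hFL : Tendsto F atTop (𝓝 L)) : Tendsto g atTop (𝓝 0) := by
  rw [Metric.tendsto_nhds]
  intro ε hε
  set δ := ε / (2 * (K + 1)) with hδ
  have hδ0 : 0 < δ := by positivity
  have hKδ : K * δ < ε / 2 := by
    rw [hδ, mul_div_assoc', div_lt_div_iff₀ (by positivity) two_pos]
    nlinarith
  have hincr : Tendsto (fun t => F (t + δ) - F t) atTop (𝓝 0) := by
    simpa using (hFL.comp (tendsto_atTop_add_const_right _ δ tendsto_id)).sub hFL
  filter_upwards [Metric.tendsto_nhds.1 hincr (ε * δ / 2) (by positivity), eventually_ge_atTop 0]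
    with t hFt ht
  rw [Real.dist_0_eq_abs] at hFt ⊢
  have hint : IntervalIntegrable g volume t (t + δ) :=
    (hg.continuousOn.mono fun s hs =>
      ht.trans (by rw [uIcc_of_le (by linarith)] at hs; exact hs.1)).intervalIntegrable
  have hosc : ‖∫ s in t..t + δ, (g s - g t)‖ ≤ K * δ * |t + δ - t| := by
    refine intervalIntegral.norm_integral_le_of_norm_le_const fun s hs => ?_
    rw [uIoc_of_le (by linarith)] at hs
    have hst := hg.dist_le_mul s (ht.trans hs.1.le) t ht
    rw [Real.dist_eq, Real.dist_eq, abs_of_pos (sub_pos.2 hs.1)] at hst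
    rw [Real.norm_eq_abs]
    calc |g s - g t| ≤ K * (s - t) := hst
      _ ≤ K * δ := by gcongr; linarith [hs.2]
  rw [intervalIntegral.integral_sub hint intervalIntegrable_const, hF t (t + δ) ht (by linarith),
    intervalIntegral.integral_const, smul_eq_mul, add_sub_cancel_left, abs_of_pos hδ0,
    Real.norm_eq_abs] at hosc
  have : δ * |g t| < δ * ε := by
    calc δ * |g t| = |δ * g t| := by rw [abs_mul, abs_of_pos hδ0]
      _ ≤ |F (t + δ) - F t| + K * δ * δ := by
          linarith [abs_sub_abs_le_abs_sub (δ * g t) (F (t + δ) - F t),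
            abs_sub_comm (F (t + δ) - F t) (δ * g t)]
      _ < δ * ε := by nlinarith
  exact lt_of_mul_lt_mul_left this hδ0.le

theorem dist_le_length_mul_of_adj {V α : Type*} [PseudoMetricSpace α]
    {G : SimpleGraph V} {f : V → α} {r : ℝ} (hf : ∀ u v, G.Adj u v → dist (f u) (f v) ≤ r) :
    ∀ {u v : V} (p : G.Walk u v), dist (f u) (f v) ≤ p.length * r
  | _, _, .nil => by simp
  | _, _, .cons hadj p => by
    have hr : 0 ≤ r := dist_nonneg.trans (hf _ _ hadj)
    calc _ ≤ _ := dist_triangle _ _ _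
      _ ≤ r + p.length * r := add_le_add (hf _ _ hadj) (dist_le_length_mul_of_adj hf p)
      _ = _ := by rw [SimpleGraph.Walk.length_cons]; push_cast; ring

lemma sum_incidence_smul {n m : ℕ} {M : Type*} [AddCommGroup M] [Module ℝ M]
    {te he : Fin m → Fin n} {B : Matrix (Fin n) (Fin m) ℝ}
    (hB : ∀ i e, B i e = if i = te e then 1 else if i = he e then -1 else 0) {e : Fin m}
    (hloop : te e ≠ he e) (y : Fin n → M) : ∑ i, B i e • y i = y (te e) - y (he e) := by
  rw [Fintype.sum_eq_add (te e) (he e) hloop fun i hi => by simp [hB, hi.1, hi.2], hB, hB,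
    if_pos rfl, if_neg hloop.symm, if_pos rfl, one_smul, neg_one_smul, sub_eq_add_neg]

lemma norm2_nonneg (p : Fin 3 → ℝ) : 0 ≤ norm2 p := Real.sqrt_nonneg _

lemma norm2_sq (p : Fin 3 → ℝ) : norm2 p ^ 2 = ∑ k, p k ^ 2 :=
  Real.sq_sqrt (by positivity)

lemma abs_le_norm2 (p : Fin 3 → ℝ) (k : Fin 3) : |p k| ≤ norm2 p := by
  rw [norm2, ← Real.sqrt_sq_eq_abs]
  exact Real.sqrt_le_sqrt (Finset.single_le_sum (f := fun j => p j ^ 2) (fun j _ => sq_nonneg _)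
    (Finset.mem_univ k))

lemma nrmTot_nonneg {n : ℕ} (y : Fin n → Fin 3 → ℝ) : 0 ≤ nrmTot y := Real.sqrt_nonneg _

lemma nrmTot_sq {n : ℕ} (y : Fin n → Fin 3 → ℝ) : nrmTot y ^ 2 = ∑ i, norm2 (y i) ^ 2 := by
  simp only [nrmTot, norm2_sq, Real.sq_sqrt (by positivity : (0 : ℝ) ≤ ∑ i, ∑ k, y i k ^ 2)]

lemma norm2_le_nrmTot {n : ℕ} (y : Fin n → Fin 3 → ℝ) (i : Fin n) : norm2 (y i) ≤ nrmTot y := by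
  rw [← pow_le_pow_iff_left₀ (norm2_nonneg _) (nrmTot_nonneg y) two_ne_zero, nrmTot_sq]
  exact Finset.single_le_sum (f := fun i => norm2 (y i) ^ 2) (fun i _ => sq_nonneg _)
    (Finset.mem_univ i)

lemma nrmTot_le_sqrt_mul_norm {n : ℕ} (w : Fin n → Fin 3 → ℝ) : nrmTot w ≤ √(3 * n) * ‖w‖ := by
  rw [nrmTot, ← Real.sqrt_sq (norm_nonneg w), ← Real.sqrt_mul (by positivity)]
  refine Real.sqrt_le_sqrt ?_
  calc ∑ i, ∑ k, w i k ^ 2 ≤ ∑ i : Fin n, ∑ k : Fin 3, ‖w‖ ^ 2 := by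
        refine Finset.sum_le_sum fun i _ => Finset.sum_le_sum fun k _ => ?_
        rw [← sq_abs]
        exact pow_le_pow_left₀ (abs_nonneg _)
          ((norm_le_pi_norm (w i) k).trans (norm_le_pi_norm w i)) 2
    _ = 3 * n * ‖w‖ ^ 2 := by simp; ring

lemma distToConsensus_le {n : ℕ} (y : Fin n → Fin 3 → ℝ) (c : Fin 3 → ℝ) :
    distToConsensus y ≤ nrmTot (fun i => y i - c) :=
  csInf_le ⟨0, by rintro _ ⟨c, rfl⟩; exact nrmTot_nonneg _⟩ ⟨c, rfl⟩

lemma distToConsensus_nonneg {n : ℕ} (y : Fin n → Fin 3 → ℝ) : 0 ≤ distToConsensus y :=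
  Real.sInf_nonneg (by rintro _ ⟨c, rfl⟩; exact nrmTot_nonneg _)

/-- `‖B̂ᵀ y‖₁`. -/
def edgeDisagreement {n m : ℕ} (B : Matrix (Fin n) (Fin m) ℝ) (y : Fin n → Fin 3 → ℝ) : ℝ :=
  ∑ e, ∑ k, |∑ i, B i e * y i k|

lemma edgeDisagreement_nonneg {n m : ℕ} (B : Matrix (Fin n) (Fin m) ℝ) (y : Fin n → Fin 3 → ℝ) :
    0 ≤ edgeDisagreement B y := by
  unfold edgeDisagreement; positivity

lemma exists_lipschitzWith_edgeDisagreement {n m : ℕ} (B : Matrix (Fin n) (Fin m) ℝ) :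
    ∃ K, LipschitzWith K (edgeDisagreement B) := by
  refine ⟨(∑ e, ∑ _k : Fin 3, ∑ i, |B i e|).toNNReal, LipschitzWith.of_dist_le_mul fun y y' => ?_⟩
  rw [Real.coe_toNNReal _ (by positivity), Real.dist_eq, edgeDisagreement, edgeDisagreement,
    ← Finset.sum_sub_distrib, Finset.sum_mul]
  refine (Finset.abs_sum_le_sum_abs _ _).trans (Finset.sum_le_sum fun e _ => ?_)
  rw [← Finset.sum_sub_distrib, Finset.sum_mul]
  refine (Finset.abs_sum_le_sum_abs _ _).trans (Finset.sum_le_sum fun k _ => ?_)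
  refine (abs_abs_sub_abs_le_abs_sub _ _).trans ?_
  rw [← Finset.sum_sub_distrib, Finset.sum_mul]
  refine (Finset.abs_sum_le_sum_abs _ _).trans (Finset.sum_le_sum fun i _ => ?_)
  rw [← mul_sub, abs_mul]
  gcongr
  exact (norm_le_pi_norm (y i - y' i) k).trans (norm_le_pi_norm (y - y') i)

lemma dist_le_edgeDisagreement {n m : ℕ} {te he : Fin m → Fin n} {B : Matrix (Fin n) (Fin m) ℝ}
    (hB : ∀ i e, B i e = if i = te e then 1 else if i = he e then -1 else 0) {e : Fin m}
    (hloop : te e ≠ he e) (y : Fin n → Fin 3 → ℝ) :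
    dist (y (te e)) (y (he e)) ≤ edgeDisagreement B y := by
  refine (dist_pi_le_iff (edgeDisagreement_nonneg B y)).2 fun k => ?_
  have hk : ∑ i, B i e * y i k = y (te e) k - y (he e) k :=
    sum_incidence_smul hB hloop fun i => y i k
  rw [Real.dist_eq, ← hk]
  exact (Finset.single_le_sum (f := fun k => |∑ i, B i e * y i k|) (fun _ _ => abs_nonneg _)
    (Finset.mem_univ k)).trans (Finset.single_le_sum
      (f := fun e => ∑ k, |∑ i, B i e * y i k|) (fun _ _ => by positivity) (Finset.mem_univ e))

lemma distToConsensus_le_edgeDisagreement {n m : ℕ} {te he : Fin m → Fin n}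
    {B : Matrix (Fin n) (Fin m) ℝ}
    (hB : ∀ i e, B i e = if i = te e then 1 else if i = he e then -1 else 0)
    (hconn : (SimpleGraph.fromRel (fun i j => ∃ e, te e = i ∧ he e = j)).Connected)
    (y : Fin n → Fin 3 → ℝ) :
    distToConsensus y ≤ √(3 * n) * n * edgeDisagreement B y := by
  obtain ⟨i₀⟩ := hconn.nonempty
  have hg := edgeDisagreement_nonneg B y
  have hadj : ∀ i j, (SimpleGraph.fromRel (fun i j => ∃ e, te e = i ∧ he e = j)).Adj i j →
      dist (y i) (y j) ≤ edgeDisagreement B y := by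
    rintro i j ⟨hij, ⟨e, rfl, rfl⟩ | ⟨e, rfl, rfl⟩⟩
    · exact dist_le_edgeDisagreement hB hij y
    · exact dist_comm (y (he e)) _ ▸ dist_le_edgeDisagreement hB hij.symm y
  have hnorm : ‖fun i => y i - y i₀‖ ≤ n * edgeDisagreement B y := by
    refine pi_norm_le_iff_of_nonneg (by positivity) |>.2 fun i => ?_
    obtain ⟨p, hp⟩ := (hconn.preconnected i i₀).exists_isPath
    rw [← dist_eq_norm]
    refine (dist_le_length_mul_of_adj hadj p).trans ?_
    gcongr
    simpa using hp.length_lt.le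
  calc distToConsensus y ≤ nrmTot (fun i => y i - y i₀) := distToConsensus_le y (y i₀)
    _ ≤ √(3 * n) * (n * edgeDisagreement B y) := by
        grw [nrmTot_le_sqrt_mul_norm, hnorm]
    _ = _ := by ring

lemma vecMul_hatm_self (p : Fin 3 → ℝ) : p ᵥ* hatm p = 0 := by
  ext j
  fin_cases j <;> simp [hatm, vecMul, dotProduct, Fin.sum_univ_three] <;> ring

lemma vecMul_Lmat_self (p : Fin 3 → ℝ) : p ᵥ* Lmat p = p := by
  by_cases hp : p = 0
  · simp [hp]
  have hpp : p ⬝ᵥ p = norm2 p ^ 2 := by rw [norm2_sq]; simp [dotProduct, sq]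
  have hne : norm2 p ^ 2 ≠ 0 := by
    simpa [← hpp, dotProduct_self_eq_zero] using hp
  rw [Lmat, if_neg hp, vecMul_add, vecMul_add, vecMul_smul, vecMul_smul, vecMul_smul,
    vecMul_one, vecMul_hatm_self, vecMul_vecMulVec, hpp, smul_zero, add_zero, smul_smul,
    div_mul_cancel₀ _ hne, ← add_smul]
  simp

lemma continuousOn_cfun : ContinuousOn cfun (Ico 0 (2 * π)) := by
  refine Real.continuous_sinc.continuousOn.div
    ((Real.continuous_sinc.comp (continuous_id.div_const 2)).continuousOn.pow 2) fun θ hθ => ?_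
  refine pow_ne_zero 2 (ne_of_gt ?_)
  change 0 < Real.sinc (θ / 2)
  rcases hθ.1.eq_or_lt with rfl | hpos
  · simp
  · rw [Real.sinc_of_ne_zero (by positivity)]
    exact div_pos (Real.sin_pos_of_pos_of_lt_pi (by positivity) (by linarith [hθ.2]))
      (by positivity)

lemma exists_abs_cfun_le {r : ℝ} (hr : r < 2 * π) : ∃ M, ∀ θ ∈ Icc 0 r, |cfun θ| ≤ M :=
  isCompact_Icc.exists_bound_of_continuousOn
    (continuousOn_cfun.mono fun _ hθ => ⟨hθ.1, hθ.2.trans_lt hr⟩)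

lemma abs_hatm_apply_le (p : Fin 3 → ℝ) (k j : Fin 3) : |hatm p k j| ≤ norm2 p := by
  fin_cases k <;> fin_cases j <;> simp [hatm, norm2_nonneg, abs_le_norm2]

lemma abs_Lmat_apply_le (p : Fin 3 → ℝ) (k j : Fin 3) :
    |Lmat p k j| ≤ 2 * |cfun (norm2 p)| + 1 + norm2 p := by
  have hone : |(1 : Matrix (Fin 3) (Fin 3) ℝ) k j| ≤ 1 := by
    rw [Matrix.one_apply]; split_ifs <;> simp
  by_cases hp : p = 0
  · rw [Lmat, if_pos hp]
    linarith [abs_nonneg (cfun (norm2 p)), norm2_nonneg p]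
  set c := cfun (norm2 p)
  have hpos : 0 < norm2 p ^ 2 := by
    rw [norm2_sq]
    obtain ⟨k, hk⟩ := Function.ne_iff.1 hp
    exact lt_of_lt_of_le (pow_pos (abs_pos.2 hk) 2 |>.trans_eq (sq_abs _))
      (Finset.single_le_sum (f := fun j => p j ^ 2) (fun j _ => sq_nonneg _) (Finset.mem_univ k))
  have hrank : |(1 - c) / norm2 p ^ 2 * (p k * p j)| ≤ 1 + |c| := by
    rw [abs_mul, abs_div, abs_of_pos hpos, div_mul_eq_mul_div, div_le_iff₀ hpos]
    gcongr
    · exact (abs_sub _ _).trans (by simp)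
    · rw [abs_mul, sq]
      exact mul_le_mul (abs_le_norm2 p k) (abs_le_norm2 p j) (abs_nonneg _) (norm2_nonneg p)
  have hentry : Lmat p k j = c * (1 : Matrix (Fin 3) (Fin 3) ℝ) k j
      + (1 - c) / norm2 p ^ 2 * (p k * p j) + 1 / 2 * hatm p k j := by
    simp [Lmat, hp, c, vecMulVec_apply]
  rw [hentry]
  calc _ ≤ |c * (1 : Matrix (Fin 3) (Fin 3) ℝ) k j| + |(1 - c) / norm2 p ^ 2 * (p k * p j)|
        + |1 / 2 * hatm p k j| := abs_add_three _ _ _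
    _ ≤ |c| * 1 + (1 + |c|) + 1 / 2 * norm2 p := by
        gcongr ?_ + ?_ + ?_
        · rw [abs_mul]
          exact mul_le_mul_of_nonneg_left hone (abs_nonneg c)
        · rw [abs_mul, abs_of_pos (by norm_num : (0 : ℝ) < 1 / 2)]
          exact mul_le_mul_of_nonneg_left (abs_hatm_apply_le p k j) (by norm_num)
    _ ≤ _ := by linarith [norm2_nonneg p]

lemma abs_Lmat_mulVec_apply_le (p v : Fin 3 → ℝ) (k : Fin 3) :
    |(Lmat p *ᵥ v) k| ≤ (2 * |cfun (norm2 p)| + 1 + norm2 p) * ∑ j, |v j| := by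
  rw [mulVec, dotProduct, Finset.mul_sum]
  refine (Finset.abs_sum_le_sum_abs _ _).trans (Finset.sum_le_sum fun j _ => ?_)
  rw [abs_mul]
  exact mul_le_mul_of_nonneg_right (abs_Lmat_apply_le p k j) (abs_nonneg _)

lemma sum_dotProduct_sum_smul {n m : ℕ} {ι : Type*} [Fintype ι] (B : Matrix (Fin n) (Fin m) ℝ)
    (y : Fin n → ι → ℝ) (s : Fin m → ι → ℝ) :
    ∑ i, y i ⬝ᵥ (∑ e, B i e • s e) = ∑ e, ∑ k, (∑ i, B i e * y i k) * s e k := by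
  simp only [dotProduct, Finset.sum_apply, Pi.smul_apply, smul_eq_mul, Finset.mul_sum,
    Finset.sum_mul]
  calc _ = ∑ i, ∑ e, ∑ k, y i k * (B i e * s e k) :=
        Finset.sum_congr rfl fun i _ => Finset.sum_comm
    _ = ∑ e, ∑ i, ∑ k, y i k * (B i e * s e k) := Finset.sum_comm
    _ = _ := Finset.sum_congr rfl fun e _ => Finset.sum_comm.trans <|
        Finset.sum_congr rfl fun k _ => Finset.sum_congr rfl fun i _ => by ring

lemma mul_eq_abs_of_sign_sel {z s : ℝ} (h : z ≠ 0 → s = Real.sign z) : z * s = |z| := by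
  rcases lt_trichotomy z 0 with hz | rfl | hz
  · simp [h hz.ne, Real.sign_of_neg hz, abs_of_neg hz]
  · simp
  · simp [h hz.ne', Real.sign_of_pos hz, abs_of_pos hz]

lemma hasDerivAt_nrmTot_sq {n m : ℕ} {B : Matrix (Fin n) (Fin m) ℝ} {x : ℝ → Fin n → Fin 3 → ℝ}
    {t : ℝ} {s : Fin m → Fin 3 → ℝ} (hs : SignSelV s (fun e k => ∑ i, B i e * x t i k))
    (hx : HasDerivAt x (fun i => -(Lmat (x t i)).mulVec (∑ e, B i e • s e)) t) :
    HasDerivAt (fun u => nrmTot (x u) ^ 2) (-2 * edgeDisagreement B (x t)) t := by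
  have hcoord : ∀ i k, HasDerivAt (fun u => x u i k)
      (-(Lmat (x t i) *ᵥ ∑ e, B i e • s e) k) t := fun i k =>
    hasDerivAt_pi.1 (hasDerivAt_pi.1 hx i) k
  have hsum : HasDerivAt (fun u => ∑ i, ∑ k, x u i k ^ 2)
      (∑ i, ∑ k, 2 * x t i k * (-(Lmat (x t i) *ᵥ ∑ e, B i e • s e) k)) t :=
    HasDerivAt.fun_sum fun i _ => HasDerivAt.fun_sum fun k _ => by
      simpa using (hcoord i k).fun_pow 2
  simp only [nrmTot_sq, norm2_sq]
  convert hsum using 1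
  calc -2 * edgeDisagreement B (x t)
      = -2 * ∑ i, x t i ⬝ᵥ (Lmat (x t i) *ᵥ (∑ e, B i e • s e)) := by
        simp only [dotProduct_mulVec, vecMul_Lmat_self, sum_dotProduct_sum_smul, edgeDisagreement]
        congr 1
        exact Finset.sum_congr rfl fun e _ => Finset.sum_congr rfl fun k _ =>
          (mul_eq_abs_of_sign_sel (hs e k).2).symm
    _ = _ := by
        simp only [Finset.mul_sum, dotProduct]
        exact Finset.sum_congr rfl fun i _ => Finset.sum_congr rfl fun k _ => by ring

lemma sum_abs_sum_smul_le {n m : ℕ} (B : Matrix (Fin n) (Fin m) ℝ) {s : Fin m → Fin 3 → ℝ}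
    (hs : ∀ e j, |s e j| ≤ 1) (i : Fin n) :
    ∑ j, |(∑ e, B i e • s e) j| ≤ 3 * ∑ i, ∑ e, |B i e| := by
  have hj : ∀ j, |(∑ e, B i e • s e) j| ≤ ∑ e, |B i e| := fun j => by
    rw [Finset.sum_apply]
    refine (Finset.abs_sum_le_sum_abs _ _).trans (Finset.sum_le_sum fun e _ => ?_)
    rw [Pi.smul_apply, smul_eq_mul, abs_mul]
    exact mul_le_of_le_one_right (abs_nonneg _) (hs e j)
  calc _ ≤ ∑ _j : Fin 3, ∑ e, |B i e| := Finset.sum_le_sum fun j _ => hj j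
    _ = 3 * ∑ e, |B i e| := by simp
    _ ≤ _ := by
        gcongr
        exact Finset.single_le_sum (f := fun i => ∑ e, |B i e|) (fun _ _ => by positivity)
          (Finset.mem_univ i)

def IsFilippovSolution {n m : ℕ} (B : Matrix (Fin n) (Fin m) ℝ) (x : ℝ → Fin n → Fin 3 → ℝ) :
    Prop :=
  ∀ᵐ t ∂(volume : Measure ℝ), 0 ≤ t → ∃ s : Fin m → Fin 3 → ℝ,
    SignSelV s (fun e k => ∑ i, B i e * x t i k) ∧
    HasDerivAt x (fun i => -(Lmat (x t i)).mulVec (∑ e, B i e • s e)) t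

namespace IsFilippovSolution

variable {n m : ℕ} {B : Matrix (Fin n) (Fin m) ℝ} {x : ℝ → Fin n → Fin 3 → ℝ}

lemma integral_edgeDisagreement (hsol : IsFilippovSolution B x)
    (hlip : ∀ a b : ℝ, 0 ≤ a → ∃ K : ℝ≥0, LipschitzOnWith K x (Icc a b))
    {a b : ℝ} (ha : 0 ≤ a) (hab : a ≤ b) :
    ∫ t in a..b, edgeDisagreement B (x t) = (nrmTot (x a) ^ 2 - nrmTot (x b) ^ 2) / 2 := by
  obtain ⟨K, hK⟩ := hlip a b ha
  have hq : ContDiff ℝ 1 fun y : Fin n → Fin 3 → ℝ => nrmTot y ^ 2 := by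
    simp only [nrmTot_sq, norm2_sq]
    fun_prop
  obtain ⟨K', hK'⟩ := hq.exists_lipschitzOnWith_comp isCompact_Icc hK
  rw [← uIcc_of_le hab] at hK'
  have hftc := hK'.absolutelyContinuousOnInterval.integral_eq_sub_of_ae_hasDerivAt
    (f' := fun t => -2 * edgeDisagreement B (x t)) <| by
      filter_upwards [hsol] with t ht hmem
      obtain ⟨s, hs, hx⟩ := ht (ha.trans (uIcc_of_le hab ▸ hmem).1)
      exact hasDerivAt_nrmTot_sq hs hx
  rw [intervalIntegral.integral_const_mul] at hftc
  simp only [Function.comp_apply] at hftc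
  linarith

lemma antitoneOn_nrmTot (hsol : IsFilippovSolution B x)
    (hlip : ∀ a b : ℝ, 0 ≤ a → ∃ K : ℝ≥0, LipschitzOnWith K x (Icc a b)) :
    AntitoneOn (fun t => nrmTot (x t)) (Ici 0) := by
  intro a ha b _ hab
  have hint := hsol.integral_edgeDisagreement hlip ha hab
  have hnonneg : 0 ≤ ∫ t in a..b, edgeDisagreement B (x t) :=
    intervalIntegral.integral_nonneg hab fun t _ => edgeDisagreement_nonneg B (x t)
  rw [← pow_le_pow_iff_left₀ (nrmTot_nonneg _) (nrmTot_nonneg _) two_ne_zero]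
  linarith

lemma exists_lipschitzOnWith (hsol : IsFilippovSolution B x)
    (hlip : ∀ a b : ℝ, 0 ≤ a → ∃ K : ℝ≥0, LipschitzOnWith K x (Icc a b))
    {r : ℝ} (hr : r < 2 * π) (hr0 : 0 ≤ r)
    (hball : ∀ t, 0 ≤ t → ∀ i, norm2 (x t i) ≤ r) : ∃ M : ℝ≥0, LipschitzOnWith M x (Ici 0) := by
  obtain ⟨Mc, hMc⟩ := exists_abs_cfun_le hr
  set M := (2 * Mc + 1 + r) * (3 * ∑ i, ∑ e, |B i e|)
  have hMc0 : 0 ≤ Mc := (abs_nonneg _).trans (hMc 0 ⟨le_rfl, hr0⟩)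
  have hM0 : 0 ≤ M := by positivity
  have hderiv : ∀ᵐ t, 0 ≤ t → HasDerivAt x (deriv x t) t ∧ ‖deriv x t‖ ≤ M := by
    filter_upwards [hsol] with t ht ht0
    obtain ⟨s, hs, hx⟩ := ht ht0
    rw [hx.deriv]
    refine ⟨hx, pi_norm_le_iff_of_nonneg hM0 |>.2 fun i =>
      pi_norm_le_iff_of_nonneg hM0 |>.2 fun k => ?_⟩
    rw [Real.norm_eq_abs, Pi.neg_apply, abs_neg]
    calc _ ≤ (2 * |cfun (norm2 (x t i))| + 1 + norm2 (x t i)) * ∑ j, |(∑ e, B i e • s e) j| :=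
          abs_Lmat_mulVec_apply_le _ _ _
      _ ≤ (2 * Mc + 1 + r) * (3 * ∑ i, ∑ e, |B i e|) := by
          gcongr
          · exact hMc _ ⟨norm2_nonneg _, hball t ht0 i⟩
          · exact hball t ht0 i
          · exact sum_abs_sum_smul_le B (fun e j => abs_le.2 (hs e j).1) i
  exact ⟨M.toNNReal, lipschitzOnWith_Ici_of_ae_norm_deriv_le (f' := deriv x) hlip <| by
    rwa [Real.coe_toNNReal _ hM0]⟩

end IsFilippovSolution

open MeasureTheory Filter in
theorem asymptotic_consensus_general {n m : ℕ}
    (te he : Fin m → Fin n)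
    (hconn : (SimpleGraph.fromRel (fun i j => ∃ e, te e = i ∧ he e = j)).Connected)
    (B : Matrix (Fin n) (Fin m) ℝ)
    (hB : ∀ i e, B i e = if i = te e then 1 else if i = he e then -1 else 0)
    (C : ℝ) (hC : C < 4 * Real.pi ^ 2)
    (x : ℝ → Fin n → Fin 3 → ℝ)
    (hlip : ∀ a b : ℝ, 0 ≤ a → ∃ K : NNReal, LipschitzOnWith K x (Set.Icc a b))
    (h0 : ∑ i, norm2 (x 0 i) ^ 2 < C)
    (hdyn : ∀ᵐ t ∂(volume : Measure ℝ), 0 ≤ t →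
      ∃ s : Fin m → Fin 3 → ℝ,
        SignSelV s (fun e k => ∑ i, B i e * x t i k) ∧
        HasDerivAt x (fun i => -(Lmat (x t i)).mulVec (∑ e, B i e • s e)) t) :
    Tendsto (fun t => distToConsensus (x t)) atTop (nhds 0) := by
  have hsol : IsFilippovSolution B x := hdyn
  have hanti := hsol.antitoneOn_nrmTot hlip
  have hr : nrmTot (x 0) < 2 * π := by
    refine lt_of_pow_lt_pow_left₀ 2 (by positivity) ?_
    rw [nrmTot_sq]
    linarith
  obtain ⟨M, hM⟩ := hsol.exists_lipschitzOnWith hlip hr (nrmTot_nonneg _) fun t ht i =>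
    (norm2_le_nrmTot (x t) i).trans (hanti self_mem_Ici ht ht)
  obtain ⟨K, hK⟩ := exists_lipschitzWith_edgeDisagreement B
  obtain ⟨L, hL⟩ := hanti.exists_tendsto_atTop ⟨0, by rintro _ ⟨t, -, rfl⟩; exact nrmTot_nonneg _⟩
  have hg : Tendsto (fun t => edgeDisagreement B (x t)) atTop (𝓝 0) :=
    tendsto_zero_of_integral_tendsto (hK.comp_lipschitzOnWith hM)
      (F := fun t => -nrmTot (x t) ^ 2 / 2)
      (fun a b ha hab => by rw [hsol.integral_edgeDisagreement hlip ha hab]; ring)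
      ((hL.pow 2).neg.div_const 2)
  refine squeeze_zero (fun t => distToConsensus_nonneg _)
    (fun t => distToConsensus_le_edgeDisagreement hB hconn (x t)) ?_
  simpa using hg.const_mul (√(3 * n) * n)

open MeasureTheory Filter in
/-- asymptotic consensus.  Under the hypotheses of the invariance
lemma, the solution converges to the consensus space: dist(x(t), 𝒞) → 0. -/
theorem asymptotic_consensus {n m : ℕ}
    (te he : Fin m → Fin n) (hloop : ∀ e, te e ≠ he e)
    (hconn : (SimpleGraph.fromRel (fun i j => ∃ e, te e = i ∧ he e = j)).Connected)
    (B : Matrix (Fin n) (Fin m) ℝ)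
    (hB : ∀ i e, B i e = if i = te e then 1 else if i = he e then -1 else 0)
    (C : ℝ) (hC0 : 0 < C) (hC : C < 4 * Real.pi ^ 2)
    (x : ℝ → Fin n → Fin 3 → ℝ)
    (hlip : ∀ a b : ℝ, 0 ≤ a → ∃ K : NNReal, LipschitzOnWith K x (Set.Icc a b))
    (h0 : ∑ i, norm2 (x 0 i) ^ 2 < C)
    (hdyn : ∀ᵐ t ∂(volume : Measure ℝ), 0 ≤ t →
      ∃ s : Fin m → Fin 3 → ℝ,
        SignSelV s (fun e k => ∑ i, B i e * x t i k) ∧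
        HasDerivAt x (fun i => -(Lmat (x t i)).mulVec (∑ e, B i e • s e)) t) :
    Tendsto (fun t => distToConsensus (x t)) atTop (nhds 0) :=
  asymptotic_consensus_general te he hconn B hB C hC x hlip h0 hdyn
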